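/- In a finite Newtonian poset, any two distinct unrelated elements have the same past and the same future: if x and y are incomparable then {z : z ≺ x} = {z : z ≺ y} and {z : x ≺ z} = {z : y ≺ z}. -/

import Mathlib

/-- The level of `x`: the cardinality of the longest chain with maximal element `x`. -/
noncomputable def level {α : Type*} [PartialOrder α] (x : α) : ℕ∞ :=
  Set.chainHeight {y | y ≤ x} (· < ·)

/-
In a finite poset the level is strictly monotone, since a longest chain below `y` extends by
`y` itself. Being Newtonian is the converse, so `x < y ↔ level x < level y`. Incomparable
elements must then have equal level, and every `z` compares strictly with both in the same way.
-/

theorem Set.chainHeight_lt_chainHeight_insert {α : Type*} [Preorder α] {s : Set α}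
    (hs : s.Finite) {b : α} (hb : ∀ a ∈ s, a < b) :
    s.chainHeight (· < ·) < (insert b s).chainHeight (· < ·) := by
  obtain ⟨t, hts, ht_card, ht_chain⟩ := s.exists_eq_chainHeight_of_finite (· < ·) hs
  have hbt : b ∉ t := fun hb' => lt_irrefl b (hb b (hts hb'))
  have h_chain : IsChain (· < ·) (insert b t) :=
    ht_chain.insert fun c hc _ => Or.inr (hb c (hts hc))
  calc s.chainHeight (· < ·) = t.encard := ht_card.symm
    _ < t.encard + 1 := (ENat.lt_add_one_iff (hs.subset hts).encard_lt_top.ne).2 le_rfl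
    _ = (insert b t).encard := (Set.encard_insert_of_notMem hbt).symm
    _ ≤ (insert b s).chainHeight (· < ·) :=
      Set.encard_le_chainHeight_of_isChain _ _ (Set.insert_subset_insert hts) h_chain

theorem level_strictMono {α : Type*} [PartialOrder α] [Finite α] :
    StrictMono (level (α := α)) := by
  intro a b hab
  calc level a ≤ (Set.Iio b).chainHeight (· < ·) :=
        Set.chainHeight_mono _ _ _ fun _ hz => lt_of_le_of_lt hz hab
    _ < (insert b (Set.Iio b)).chainHeight (· < ·) :=
        Set.chainHeight_lt_chainHeight_insert (Set.toFinite _) fun _ h => h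
    _ = level b := by rw [Set.Iio_insert]; rfl

def Newtonian (α : Type*) [PartialOrder α] : Prop :=
  ∀ x y : α, level y < level x → y < x

namespace Newtonian

variable {α : Type*} [PartialOrder α]

theorem level_eq_of_not_le_of_not_le (hN : Newtonian α) {x y : α} (hxy : ¬ x ≤ y)
    (hyx : ¬ y ≤ x) : level x = level y :=
  le_antisymm (not_lt.1 fun h => hyx (hN x y h).le) (not_lt.1 fun h => hxy (hN y x h).le)

theorem lt_iff_level_lt [Finite α] (hN : Newtonian α) {x y : α} : x < y ↔ level x < level y :=
  ⟨fun h => level_strictMono h, hN y x⟩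

end Newtonian

/-- In a finite Newtonian poset, any two incomparable elements have the same
past and the same future. -/
theorem newtonian_incomparable_same_past_future
    {α : Type} [PartialOrder α] [Fintype α]
    (hN : ∀ x y : α, level y < level x → y < x)
    (x y : α) (hxy : ¬ x ≤ y) (hyx : ¬ y ≤ x) :
    {z : α | z < x} = {z : α | z < y} ∧ {z : α | x < z} = {z : α | y < z} := by
  have hNewton : Newtonian α := hN
  have hlev : level x = level y := hNewton.level_eq_of_not_le_of_not_le hxy hyx
  constructor <;> ext z <;> simp only [Set.mem_ofPred_eq, hNewton.lt_iff_level_lt, hlev]
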